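/- Let Γ be a cancellation monoid with neutral element e, A a Γ-graded local ring, and P a finitely generated Γ-graded A-module which is projective as an (ungraded) A-module. Then P is a free A-module; indeed, any minimal homogeneous generating set Ω = {ξ₁, …, ξ_s} of P is a free A-basis of P. -/

import Mathlib

/-!
Let `ξ` be a minimal homogeneous generating set of `P` and `K` the kernel of `A^s → P`,
`e i ↦ ξ i`. By minimality no relation among the `ξ i` has a unit coefficient, so homogeneous
relations have all coefficients in `𝔐 = maximalGradedIdeal 𝒜`; the homogeneous components of
any relation are relations, hence every element of `K` has coordinates in `𝔐`. Since `P` is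
projective, `K` is a direct summand of `A^s`, so `K = 𝔐 K`. As `K` is finitely generated and
graded (with `e i` of degree `deg ξ i`), graded Nakayama gives `K = 0`.
-/

section

variable {Γ : Type*} [AddCancelMonoid Γ] [DecidableEq Γ]
variable {A : Type*} [Ring A] (𝒜 : Γ → AddSubgroup A) [GradedRing 𝒜]

/-- The maximal graded ideal of a `Γ`-graded local ring: the two-sided ideal generated by
all non-invertible homogeneous elements. -/
def maximalGradedIdeal : TwoSidedIdeal A :=
  TwoSidedIdeal.span {a : A | (a ≠ 0 ∧ ∃ γ : Γ, a ∈ 𝒜 γ) ∧ ¬IsUnit a}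

end

open DirectSum

namespace GradedRing

variable {Γ : Type*} [AddCancelMonoid Γ] [DecidableEq Γ]
variable {A : Type*} [Ring A] (𝒜 : Γ → AddSubgroup A) [GradedRing 𝒜]

open Classical in
/-- The component of degree `α` for the `α` with `α + β = τ` (unique by cancellation), or `0` if
there is none; for `p` of degree `β`, the degree-`τ` part of `a • p` is `projShift 𝒜 β τ a • p`. -/
noncomputable def projShift (β τ : Γ) : A →+ A :=
  if h : ∃ α, α + β = τ then proj 𝒜 h.choose else 0

variable {𝒜}

theorem projShift_eq_proj {α β τ : Γ} (h : α + β = τ) : projShift 𝒜 β τ = proj 𝒜 α := by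
  have hex : ∃ α, α + β = τ := ⟨α, h⟩
  rw [projShift, dif_pos hex, add_right_cancel (hex.choose_spec.trans h.symm)]

theorem projShift_eq_zero {β τ : Γ} (h : ¬∃ α, α + β = τ) : projShift 𝒜 β τ = 0 :=
  dif_neg h

theorem projShift_self (β : Γ) : projShift 𝒜 β β = proj 𝒜 0 :=
  projShift_eq_proj (zero_add β)

theorem projShift_apply_of_mem {a : A} {α : Γ} (ha : a ∈ 𝒜 α) (β τ : Γ) :
    projShift 𝒜 β τ a = if α + β = τ then a else 0 := by
  split_ifs with h
  · rw [projShift_eq_proj h, proj_apply, decompose_of_mem_same 𝒜 ha]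
  · by_cases hex : ∃ α', α' + β = τ
    · obtain ⟨α', hα'⟩ := hex
      rw [projShift_eq_proj hα', proj_apply,
        decompose_of_mem_ne 𝒜 ha fun hαα' => h (hαα' ▸ hα')]
    · rw [projShift_eq_zero hex, AddMonoidHom.zero_apply]

theorem exists_projShift_mem (β τ : Γ) (a : A) : ∃ α, projShift 𝒜 β τ a ∈ 𝒜 α := by
  by_cases hex : ∃ α, α + β = τ
  · obtain ⟨α, hα⟩ := hex
    exact ⟨α, by rw [projShift_eq_proj hα]; exact SetLike.coe_mem _⟩
  · exact ⟨τ, by rw [projShift_eq_zero hex]; exact zero_mem _⟩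

theorem projShift_projShift (β τ : Γ) (a : A) :
    projShift 𝒜 β τ (projShift 𝒜 β τ a) = projShift 𝒜 β τ a := by
  by_cases hex : ∃ α, α + β = τ
  · obtain ⟨α, hα⟩ := hex
    rw [projShift_eq_proj hα, proj_apply, proj_apply, decompose_coe, of_eq_same]
  · simp [projShift_eq_zero hex]

theorem sum_projShift {β : Γ} {T : Finset Γ} (a : A)
    (hT : ∀ α, proj 𝒜 α a ≠ 0 → α + β ∈ T) :
    ∑ τ ∈ T, projShift 𝒜 β τ a = a := by
  classical
  have hsupp : (decompose 𝒜 a).support.image (· + β) ⊆ T := by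
    simpa [Finset.subset_iff, mem_support_iff] using hT
  rw [← Finset.sum_subset hsupp, Finset.sum_image fun _ _ _ _ => add_right_cancel]
  · simp_rw [projShift_eq_proj rfl, proj_apply]
    exact sum_support_decompose 𝒜 a
  · intro τ _ hτ
    by_cases hex : ∃ α, α + β = τ
    · obtain ⟨α, rfl⟩ := hex
      rw [projShift_eq_proj rfl, ← not_ne_iff, ← mem_support_iff]
      exact fun hα => hτ (Finset.mem_image_of_mem _ hα)
    · rw [projShift_eq_zero hex, AddMonoidHom.zero_apply]

variable {M : Type*} [AddCommGroup M] [Module A M] {𝓜 : Γ → AddSubgroup M}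
  [SetLike.GradedSMul 𝒜 𝓜] [Decomposition 𝓜]

theorem coe_decompose_smul_of_mem {β : Γ} {p : M} (hp : p ∈ 𝓜 β) (a : A) (τ : Γ) :
    (decompose 𝓜 (a • p) τ : M) = projShift 𝒜 β τ a • p := by
  induction a using Decomposition.inductionOn 𝒜 with
  | zero => simp
  | @homogeneous α a =>
    rw [projShift_apply_of_mem a.2]
    have hmem : (a : A) • p ∈ 𝓜 (α + β) := SetLike.GradedSMul.smul_mem a.2 hp
    split_ifs with h
    · rw [← h, decompose_of_mem_same 𝓜 hmem]
    · rw [decompose_of_mem_ne 𝓜 hmem h, zero_smul]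
  | add a a' ha ha' =>
    rw [add_smul, decompose_add, DirectSum.add_apply, AddSubgroup.coe_add, ha, ha', map_add,
      add_smul]

theorem coe_decompose_mul_of_mem {β : Γ} {b : A} (hb : b ∈ 𝒜 β) (a : A) (τ : Γ) :
    (decompose 𝒜 (a * b) τ : A) = projShift 𝒜 β τ a * b :=
  coe_decompose_smul_of_mem hb a τ

theorem projShift_add_right (β γ τ : Γ) : projShift 𝒜 (γ + β) (τ + β) = projShift 𝒜 γ τ := by
  by_cases hex : ∃ α, α + γ = τ
  · obtain ⟨α, rfl⟩ := hex
    rw [projShift_eq_proj rfl, projShift_eq_proj (add_assoc α γ β).symm]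
  · refine (projShift_eq_zero fun ⟨α, hα⟩ => hex ⟨α, ?_⟩).trans (projShift_eq_zero hex).symm
    exact add_right_cancel (show α + γ + β = τ + β by rw [add_assoc, hα])

theorem projShift_mul_projShift (β ν μ : Γ) (m a : A) :
    projShift 𝒜 β μ (m * projShift 𝒜 β ν a) = projShift 𝒜 ν μ m * projShift 𝒜 β ν a := by
  by_cases hex : ∃ γ, γ + β = ν
  · obtain ⟨γ, rfl⟩ := hex
    have hmem : projShift 𝒜 β (γ + β) a ∈ 𝒜 γ := by
      rw [projShift_eq_proj rfl]; exact SetLike.coe_mem _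
    by_cases hμ : ∃ α, α + β = μ
    · obtain ⟨α, rfl⟩ := hμ
      rw [projShift_eq_proj (rfl : α + β = α + β), proj_apply, coe_decompose_mul_of_mem hmem,
        projShift_add_right]
    · rw [projShift_eq_zero hμ, projShift_eq_zero (β := γ + β) (τ := μ)
        fun ⟨α, hα⟩ => hμ ⟨α + γ, by rw [add_assoc, hα]⟩]
      simp
  · simp [projShift_eq_zero hex]

variable {ι : Type*} (δ : ι → Γ)

variable (𝒜) in
/-- The degree-`μ` component of the free module `ι → A`, graded so that the `i`-th basis vector
has degree `δ i`. -/
noncomputable def projShiftPi (μ : Γ) : (ι → A) →+ (ι → A) :=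
  AddMonoidHom.pi fun i => (projShift 𝒜 (δ i) μ).comp (Pi.evalAddMonoidHom (fun _ => A) i)

@[simp]
theorem projShiftPi_apply (μ : Γ) (v : ι → A) (i : ι) :
    projShiftPi 𝒜 δ μ v i = projShift 𝒜 (δ i) μ (v i) :=
  rfl

theorem projShiftPi_projShiftPi (μ : Γ) (v : ι → A) :
    projShiftPi 𝒜 δ μ (projShiftPi 𝒜 δ μ v) = projShiftPi 𝒜 δ μ v :=
  funext fun _ => projShift_projShift _ _ _

theorem projShiftPi_smul_of_eq {ν : Γ} {w : ι → A} (hw : projShiftPi 𝒜 δ ν w = w) (m : A)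
    (μ : Γ) : projShiftPi 𝒜 δ μ (m • w) = projShift 𝒜 ν μ m • w := by
  funext i
  have hwi := congrFun hw i
  simp only [projShiftPi_apply, Pi.smul_apply, smul_eq_mul] at hwi ⊢
  rw [← hwi, projShift_mul_projShift]

theorem exists_sum_projShiftPi [Finite ι] (v : ι → A) :
    ∃ T : Finset Γ, ∑ μ ∈ T, projShiftPi 𝒜 δ μ v = v := by
  classical
  have := Fintype.ofFinite ι
  refine ⟨Finset.univ.biUnion fun i => (decompose 𝒜 (v i)).support.image (· + δ i), ?_⟩
  funext i
  rw [Finset.sum_apply]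
  refine sum_projShift (v i) fun α hα => Finset.mem_biUnion.mpr ⟨i, Finset.mem_univ _, ?_⟩
  exact Finset.mem_image_of_mem _ ((mem_support_iff 𝒜 _ _).mpr hα)

theorem coe_decompose_linearCombination [Fintype ι] {ξ : ι → M} (hξ : ∀ i, ξ i ∈ 𝓜 (δ i))
    (v : ι → A) (μ : Γ) :
    (decompose 𝓜 (Fintype.linearCombination A ξ v) μ : M) =
      Fintype.linearCombination A ξ (projShiftPi 𝒜 δ μ v) := by
  rw [Fintype.linearCombination_apply, Fintype.linearCombination_apply, decompose_sum,
    DFinsupp.finsetSum_apply, AddSubmonoidClass.coe_finsetSum]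
  exact Finset.sum_congr rfl fun i _ => coe_decompose_smul_of_mem (hξ i) _ _

end GradedRing

section MaximalGradedIdeal

open GradedRing

theorem mem_maximalGradedIdeal_of_mem {Γ A : Type*} [Ring A] {𝒜 : Γ → AddSubgroup A} {a : A}
    {γ : Γ} (ha : a ∈ 𝒜 γ) (hu : ¬IsUnit a) : a ∈ maximalGradedIdeal 𝒜 := by
  rcases eq_or_ne a 0 with rfl | h0
  · exact zero_mem _
  · exact TwoSidedIdeal.subset_span ⟨⟨h0, γ, ha⟩, hu⟩

variable {Γ : Type*} [AddMonoid Γ] [DecidableEq Γ]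
variable {A : Type*} [Ring A] {𝒜 : Γ → AddSubgroup A} [GradedRing 𝒜]

theorem proj_mem_maximalGradedIdeal {a : A} (ha : a ∈ maximalGradedIdeal 𝒜) (γ : Γ) :
    proj 𝒜 γ a ∈ maximalGradedIdeal 𝒜 := by
  classical
  induction ha using TwoSidedIdeal.span_induction generalizing γ with
  | mem x hx =>
    obtain ⟨σ, hσ⟩ := hx.1.2
    rw [proj_apply]
    by_cases h : σ = γ
    · subst h
      rw [decompose_of_mem_same 𝒜 hσ]
      exact TwoSidedIdeal.subset_span hx
    · rw [decompose_of_mem_ne 𝒜 hσ h]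
      exact zero_mem _
  | zero => simp
  | add x y _ _ hx hy => rw [map_add]; exact add_mem (hx γ) (hy γ)
  | neg x _ hx => rw [map_neg]; exact neg_mem (hx γ)
  | left_absorb a x _ hx =>
    rw [proj_apply, decompose_mul, coe_mul_apply]
    exact sum_mem fun ij _ => TwoSidedIdeal.mul_mem_left _ _ _ (hx ij.2)
  | right_absorb b x _ hx =>
    rw [proj_apply, decompose_mul, coe_mul_apply]
    exact sum_mem fun ij _ => TwoSidedIdeal.mul_mem_right _ _ _ (hx ij.1)

theorem isUnit_one_sub_of_mem_maximalGradedIdeal (hloc : maximalGradedIdeal 𝒜 ≠ ⊤) {c : A}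
    (hc : c ∈ 𝒜 0) (hc𝔐 : c ∈ maximalGradedIdeal 𝒜) : IsUnit (1 - c) := by
  by_contra hu
  have h1c := mem_maximalGradedIdeal_of_mem (sub_mem (SetLike.one_mem_graded 𝒜) hc) hu
  exact hloc ((TwoSidedIdeal.one_mem_iff _).mp (by simpa using add_mem hc𝔐 h1c))

end MaximalGradedIdeal

namespace GradedRing

open Submodule

variable {Γ : Type*} [AddCancelMonoid Γ] [DecidableEq Γ]
variable {A : Type*} [Ring A] {𝒜 : Γ → AddSubgroup A} [GradedRing 𝒜]
variable {ι : Type*} (δ : ι → Γ)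

theorem exists_homogeneous_span_eq [Finite ι] {K : Submodule A (ι → A)} (hK : K.FG)
    (hhom : ∀ v ∈ K, ∀ μ, projShiftPi 𝒜 δ μ v ∈ K) :
    ∃ S : Finset (ι → A), (∀ v ∈ S, ∃ μ, projShiftPi 𝒜 δ μ v = v) ∧ span A (S : Set _) = K := by
  classical
  obtain ⟨G, rfl⟩ := hK
  choose T hT using exists_sum_projShiftPi (𝒜 := 𝒜) δ
  refine ⟨G.biUnion fun g => (T g).image fun μ => projShiftPi 𝒜 δ μ g, ?_, le_antisymm ?_ ?_⟩
  · simp only [Finset.mem_biUnion, Finset.mem_image]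
    rintro _ ⟨g, -, μ, -, rfl⟩
    exact ⟨μ, projShiftPi_projShiftPi δ μ g⟩
  · rw [span_le]
    simp only [Finset.coe_biUnion, Finset.coe_image, Set.iUnion_subset_iff, Set.image_subset_iff]
    exact fun g hg μ _ => hhom g (subset_span hg) μ
  · rw [span_le]
    intro g hg
    rw [← hT g]
    refine sum_mem fun μ hμ => subset_span ?_
    exact Finset.mem_biUnion.mpr ⟨g, hg, Finset.mem_image_of_mem _ hμ⟩

/-- Comparing degree-`μ` parts, the coefficient of `η` in an expression of `η` over `𝔐` becomes
one of degree `0`, so `1 -` it is a unit. -/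
theorem mem_span_diff_singleton_of_mem_smul_span (hloc : maximalGradedIdeal 𝒜 ≠ ⊤)
    {S : Finset (ι → A)} (hS : ∀ v ∈ S, ∃ μ, projShiftPi 𝒜 δ μ v = v) {η : ι → A} (hη : η ∈ S)
    (hη𝔐 : η ∈ (maximalGradedIdeal 𝒜).asIdeal • span A (S : Set (ι → A))) :
    η ∈ span A ((S : Set (ι → A)) \ {η}) := by
  classical
  choose! deg hdeg using hS
  rw [← Set.image_id (S : Set (ι → A)), mem_ideal_smul_span_iff_exists_sum'] at hη𝔐
  obtain ⟨m, hm𝔐, hm⟩ := hη𝔐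
  rw [Finsupp.sum_fintype _ _ (by simp)] at hm
  obtain ⟨μ, hμ⟩ : ∃ μ, deg η = μ := ⟨_, rfl⟩
  have hημ : projShiftPi 𝒜 δ μ η = η := hμ ▸ hdeg η hη
  let η' : (S : Set (ι → A)) := ⟨η, hη⟩
  have hsum : η = ∑ x : (S : Set (ι → A)), projShift 𝒜 (deg x) μ (m x) • (x : ι → A) := by
    conv_lhs => rw [← hημ, ← hm, map_sum]
    exact Finset.sum_congr rfl fun x _ => projShiftPi_smul_of_eq δ (hdeg x x.2) _ _
  rw [← Finset.add_sum_erase _ _ (Finset.mem_univ η'), show deg η' = μ from hμ] at hsum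
  have hc0 : projShift 𝒜 μ μ (m η') ∈ 𝒜 0 := by
    rw [projShift_self]; exact SetLike.coe_mem _
  have hc𝔐 : projShift 𝒜 μ μ (m η') ∈ maximalGradedIdeal 𝒜 := by
    rw [projShift_self]
    exact proj_mem_maximalGradedIdeal (TwoSidedIdeal.mem_asIdeal.mp (hm𝔐 η')) 0
  rw [← smul_mem_iff_of_isUnit _ (isUnit_one_sub_of_mem_maximalGradedIdeal hloc hc0 hc𝔐),
    sub_smul, one_smul, sub_eq_of_eq_add' hsum]
  refine sum_mem fun x hx => smul_mem _ _ (subset_span ⟨x.2, fun h => ?_⟩)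
  exact Finset.ne_of_mem_erase hx (Subtype.ext h)

theorem span_eq_bot_of_le_smul (hloc : maximalGradedIdeal 𝒜 ≠ ⊤) (S : Finset (ι → A))
    (hS : ∀ v ∈ S, ∃ μ, projShiftPi 𝒜 δ μ v = v)
    (hle : span A (S : Set (ι → A)) ≤ (maximalGradedIdeal 𝒜).asIdeal • span A (S : Set (ι → A))) :
    span A (S : Set (ι → A)) = ⊥ := by
  classical
  induction S using Finset.strongInduction with
  | H S ih =>
    obtain rfl | ⟨η, hη⟩ := S.eq_empty_or_nonempty
    · simp
    have hspan : span A (S.erase η : Set (ι → A)) = span A S := by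
      refine le_antisymm (span_mono (Finset.erase_subset η S)) (span_le.mpr fun v hv => ?_)
      rcases eq_or_ne v η with rfl | hvη
      · rw [Finset.coe_erase]
        exact mem_span_diff_singleton_of_mem_smul_span δ hloc hS hv (hle (subset_span hv))
      · exact subset_span (Finset.mem_erase.mpr ⟨hvη, hv⟩)
    rw [← hspan] at hle ⊢
    exact ih _ (Finset.erase_ssubset hη) (fun v hv => hS v (Finset.mem_of_mem_erase hv)) hle

theorem eq_bot_of_le_smul [Finite ι] (hloc : maximalGradedIdeal 𝒜 ≠ ⊤)
    {K : Submodule A (ι → A)} (hK : K.FG) (hhom : ∀ v ∈ K, ∀ μ, projShiftPi 𝒜 δ μ v ∈ K)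
    (hle : K ≤ (maximalGradedIdeal 𝒜).asIdeal • K) : K = ⊥ := by
  obtain ⟨S, hS, rfl⟩ := exists_homogeneous_span_eq δ hK hhom
  exact span_eq_bot_of_le_smul δ hloc S hS hle

end GradedRing

namespace LinearMap

open Submodule

variable {A : Type*} [Ring A] {ι : Type*} {P : Type*} [AddCommGroup P] [Module A P]
variable {π : (ι → A) →ₗ[A] P} {σ : P →ₗ[A] (ι → A)}

theorem ker_fg_of_comp_eq_id [Finite ι] (hσ : π ∘ₗ σ = LinearMap.id) : (ker π).FG := by
  rw [ker_eq_range_of_comp_eq_id hσ, range_eq_map]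
  exact Module.Finite.fg_top.map _

theorem ker_le_smul_ker_of_comp_eq_id [Fintype ι] (hσ : π ∘ₗ σ = LinearMap.id) {I : Ideal A}
    (hI : ∀ k ∈ ker π, ∀ i, k i ∈ I) : ker π ≤ I • ker π := by
  classical
  intro k hk
  set E : Module.End A (ι → A) := LinearMap.id - σ ∘ₗ π
  have hEk : E k = k := by simp [E, mem_ker.mp hk]
  rw [← hEk, pi_eq_sum_univ k, map_sum]
  refine sum_mem fun i _ => ?_
  rw [map_smul, ker_eq_range_of_comp_eq_id hσ]
  exact smul_mem_smul (hI k hk i) (mem_range_self _ _)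

end LinearMap

section MinimalGenerators

open Submodule

variable {R M : Type*} [Ring R] [AddCommGroup M] [Module R M]

theorem not_isUnit_of_linearCombination_eq_zero {ι : Type*} [Fintype ι] {v : ι → M}
    (hinj : Function.Injective v) (hspan : span R (Set.range v) = ⊤)
    (hmin : ∀ T ⊂ Set.range v, span R T ≠ ⊤) {b : ι → R}
    (hb : Fintype.linearCombination R v b = 0) (i : ι) : ¬IsUnit (b i) := by
  classical
  intro hu
  refine hmin (Set.range v \ {v i}) (Set.sdiff_singleton_ssubset.mpr ⟨i, rfl⟩) ?_
  rw [eq_top_iff, ← hspan, span_le]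
  rintro _ ⟨j, rfl⟩
  rcases eq_or_ne j i with rfl | hji
  · rw [Fintype.linearCombination_apply, ← Finset.add_sum_erase _ _ (Finset.mem_univ j)] at hb
    rw [SetLike.mem_coe, ← smul_mem_iff_of_isUnit _ hu, eq_neg_of_add_eq_zero_left hb]
    refine neg_mem (sum_mem fun k hk => smul_mem _ _ (subset_span ⟨⟨k, rfl⟩, ?_⟩))
    exact fun h => Finset.ne_of_mem_erase hk (hinj h)
  · exact subset_span ⟨⟨j, rfl⟩, fun h => hji (hinj h)⟩

theorem exists_subset_minimal_span_eq_top {H : Finset M} (hH : span R (H : Set M) = ⊤) :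
    ∃ Ω ⊆ H, span R (Ω : Set M) = ⊤ ∧ ∀ T ⊂ (Ω : Set M), span R T ≠ ⊤ := by
  obtain ⟨Ω, hΩH, hΩ⟩ :=
    exists_minimal_le_of_wellFoundedLT (fun Ω : Finset M => span R (Ω : Set M) = ⊤) H hH
  refine ⟨Ω, hΩH, hΩ.prop, fun T hT hTspan => hT.not_subset ?_⟩
  have hTfin : T.Finite := Ω.finite_toSet.subset hT.subset
  have := hΩ.le_of_le (y := hTfin.toFinset) (by rwa [hTfin.coe_toFinset]) fun p hp =>
    Finset.mem_coe.mp (hT.subset (hTfin.mem_toFinset.mp hp))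
  exact fun p hp => hTfin.mem_toFinset.mp (this hp)

end MinimalGenerators

open DirectSum Submodule in
theorem exists_finset_homogeneous_span_eq_top {Γ R M σ : Type*} [DecidableEq Γ] [Semiring R]
    [AddCommMonoid M] [Module R M] [Module.Finite R M] [SetLike σ M] [AddSubmonoidClass σ M]
    {𝓜 : Γ → σ} [Decomposition 𝓜] :
    ∃ H : Finset M, (∀ p ∈ H, ∃ γ, p ∈ 𝓜 γ) ∧ span R (H : Set M) = ⊤ := by
  classical
  obtain ⟨G, hG⟩ := Module.Finite.fg_top (R := R) (M := M)
  refine ⟨G.biUnion fun x => (decompose 𝓜 x).support.image fun γ => (decompose 𝓜 x γ : M),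
    ?_, eq_top_iff.mpr (hG ▸ span_le.mpr fun x hx => ?_)⟩
  · simp only [Finset.mem_biUnion, Finset.mem_image]
    rintro _ ⟨x, -, γ, -, rfl⟩
    exact ⟨γ, SetLike.coe_mem _⟩
  · rw [SetLike.mem_coe, ← sum_support_decompose 𝓜 x]
    refine sum_mem fun γ hγ => subset_span ?_
    exact Finset.mem_biUnion.mpr ⟨x, hx, Finset.mem_image_of_mem _ hγ⟩

section GradedModule

open GradedRing DirectSum Submodule LinearMap

variable {Γ : Type*} [AddCancelMonoid Γ] [DecidableEq Γ]
variable {A : Type*} [Ring A] {𝒜 : Γ → AddSubgroup A} [GradedRing 𝒜]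
variable {P : Type*} [AddCommGroup P] [Module A P] {𝓟 : Γ → AddSubgroup P}
  [SetLike.GradedSMul 𝒜 𝓟] [Decomposition 𝓟]

variable {ι : Type*} [Fintype ι] {ξ : ι → P}

theorem mem_maximalGradedIdeal_of_linearCombination_eq_zero {δ : ι → Γ}
    (hξ : ∀ i, ξ i ∈ 𝓟 (δ i)) (hinj : Function.Injective ξ)
    (hspan : span A (Set.range ξ) = ⊤) (hmin : ∀ T ⊂ Set.range ξ, span A T ≠ ⊤) {b : ι → A}
    (hb : Fintype.linearCombination A ξ b = 0) (i : ι) : b i ∈ maximalGradedIdeal 𝒜 := by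
  classical
  rw [← sum_support_decompose 𝒜 (b i)]
  refine sum_mem fun α _ => ?_
  have hrel : Fintype.linearCombination A ξ (projShiftPi 𝒜 δ (α + δ i) b) = 0 := by
    rw [← coe_decompose_linearCombination δ hξ, hb, decompose_zero, DirectSum.zero_apply,
      ZeroMemClass.coe_zero]
  obtain ⟨γ, hγ⟩ := exists_projShift_mem (𝒜 := 𝒜) (δ i) (α + δ i) (b i)
  have := mem_maximalGradedIdeal_of_mem hγ
    (not_isUnit_of_linearCombination_eq_zero hinj hspan hmin hrel i)
  rwa [projShift_eq_proj rfl, GradedRing.proj_apply] at this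

theorem linearIndependent_of_minimal_homogeneous [Module.Projective A P]
    (hloc : maximalGradedIdeal 𝒜 ≠ ⊤) (hinj : Function.Injective ξ)
    (hhom : ∀ i, ∃ γ, ξ i ∈ 𝓟 γ) (hspan : span A (Set.range ξ) = ⊤)
    (hmin : ∀ T ⊂ Set.range ξ, span A T ≠ ⊤) : LinearIndependent A ξ := by
  choose δ hδ using hhom
  obtain ⟨σ, hσ⟩ := Module.projective_lifting_property (Fintype.linearCombination A ξ)
    LinearMap.id ((span_range_eq_top_iff_surjective_fintypeLinearCombination A ξ).1 hspan)
  have hker : ker (Fintype.linearCombination A ξ) = ⊥ := by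
    refine eq_bot_of_le_smul δ hloc (ker_fg_of_comp_eq_id hσ) (fun k hk μ => ?_)
      (ker_le_smul_ker_of_comp_eq_id hσ fun k hk i => TwoSidedIdeal.mem_asIdeal.mpr
        (mem_maximalGradedIdeal_of_linearCombination_eq_zero hδ hinj hspan hmin hk i))
    rw [mem_ker, ← coe_decompose_linearCombination δ hδ, mem_ker.mp hk, decompose_zero,
      DirectSum.zero_apply, ZeroMemClass.coe_zero]
  refine Fintype.linearIndependent_iff.mpr fun b hb i => ?_
  have hbker : b ∈ ker (Fintype.linearCombination A ξ) := hb
  rw [hker, mem_bot] at hbker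
  exact congrFun hbker i

end GradedModule

section

variable {Γ : Type*} [AddCancelMonoid Γ] [DecidableEq Γ]
variable {A : Type*} [Ring A] (𝒜 : Γ → AddSubgroup A) [GradedRing 𝒜]

/-- **Theorem 4.6.**  Let `Γ` be a cancellation monoid (written additively), `A` a
`Γ`-graded local ring (the graded local condition being that the maximal graded ideal
`𝔐` is proper), and `P` a finitely generated `Γ`-graded `A`-module which is projective
as an ungraded `A`-module.  Then `P` is a free `A`-module; indeed, any minimal
homogeneous generating set `Ω = {ξ₁, …, ξ_s}` of `P` is a free `A`-basis of `P` (it is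
`A`-linearly independent and spans `P`). -/
theorem gr_projective_is_free
    (hloc : maximalGradedIdeal 𝒜 ≠ ⊤)
    {P : Type*} [AddCommGroup P] [Module A P] [Module.Finite A P]
    (𝓟 : Γ → AddSubgroup P) [SetLike.GradedSMul 𝒜 𝓟] [DirectSum.Decomposition 𝓟]
    (hproj : Module.Projective A P) :
    Module.Free A P ∧
      ∀ (s : ℕ) (ξ : Fin s → P), Function.Injective ξ →
        (∀ i : Fin s, ξ i ≠ 0 ∧ ∃ γ : Γ, ξ i ∈ 𝓟 γ) →
        Submodule.span A (Set.range ξ) = ⊤ →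
        (∀ T ⊂ Set.range ξ, Submodule.span A T ≠ ⊤) →
        LinearIndependent A ξ ∧ Submodule.span A (Set.range ξ) = ⊤ := by
  obtain ⟨H, hHhom, hHspan⟩ := exists_finset_homogeneous_span_eq_top (R := A) (𝓜 := 𝓟)
  obtain ⟨Ω, hΩH, hΩspan, hΩmin⟩ := exists_subset_minimal_span_eq_top hHspan
  have hrange : Set.range ((↑) : Ω → P) = Ω := Subtype.range_coe
  have hΩli : LinearIndependent A ((↑) : Ω → P) :=
    linearIndependent_of_minimal_homogeneous hloc Subtype.val_injective
      (fun p => hHhom p (hΩH p.2)) (hrange ▸ hΩspan) (hrange ▸ hΩmin)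
  refine ⟨.of_basis (.mk hΩli (hrange ▸ hΩspan).ge), fun s ξ hinj hhom hspan hmin => ?_⟩
  exact ⟨linearIndependent_of_minimal_homogeneous hloc hinj (fun i => (hhom i).2) hspan hmin,
    hspan⟩

end
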